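/- arXiv:0910.0571 — 2 statements merged into one kernel-verified Lean document; each statement's English description precedes it below -/
import Mathlib

section
/- Let p and q be odd primes with q ≡ 3 (mod 8), and let r, s be positive integers with q^s = 16·p^r + 1. Then s is even, q^(s/2) = 9 (so q = 3, s = 4), and p = 5. -/
lemma pow_mod16_aux (m : ℕ) (hm : m = 3 ∨ m = 11) (s : ℕ) (h1 : m ^ s % 16 = 1) :
    s % 4 = 0 := by
  have key : m ^ s % 16 = m ^ (s % 4) % 16 := by
    conv_lhs => rw [← Nat.div_add_mod s 4, pow_add, pow_mul]
    rw [Nat.mul_mod, Nat.pow_mod]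
    rcases hm with rfl | rfl <;> norm_num
  rw [key] at h1
  have h4 : s % 4 = 0 ∨ s % 4 = 1 ∨ s % 4 = 2 ∨ s % 4 = 3 := by omega
  rcases hm with rfl | rfl <;> rcases h4 with h | h | h | h <;>
    rw [h] at h1 <;> norm_num at h1 <;> omega

theorem stmt_2 (p q : ℕ) (hp : p.Prime) (hq : q.Prime) (hpodd : Odd p) (hqodd : Odd q)
    (hq8 : q % 8 = 3) (r s : ℕ) (hr : 0 < r) (hs : 0 < s)
    (h : q ^ s = 16 * p ^ r + 1) :
    Even s ∧ q ^ (s / 2) = 9 ∧ q = 3 ∧ s = 4 ∧ p = 5 := by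
  have h16 : q ^ s % 16 = 1 := by omega
  have hq16 : q % 16 = 3 ∨ q % 16 = 11 := by omega
  have hs4 : s % 4 = 0 := by
    apply pow_mod16_aux (q % 16) hq16 s
    rwa [← Nat.pow_mod]
  obtain ⟨k, rfl⟩ : ∃ k, s = 4 * k := ⟨s / 4, by omega⟩
  have hk : 0 < k := by omega
  set Y := q ^ k with hY
  have hYodd : Odd Y := hqodd.pow
  have hYs : Y ^ 4 = 16 * p ^ r + 1 := by
    rw [hY, ← pow_mul, mul_comm]; exact h
  obtain ⟨u, hu⟩ := hYodd
  have heven : Even (u ^ 2 + u) := by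
    have : u ^ 2 + u = u * (u + 1) := by ring
    rw [this]; exact Nat.even_mul_succ_self u
  obtain ⟨v, hv⟩ := heven
  have hY2 : Y ^ 2 = 8 * v + 1 := by rw [hu]; nlinarith [hv]
  have hsq : (8 * v + 1) ^ 2 = 16 * p ^ r + 1 := by
    rw [← hY2]; rw [← hYs]; ring
  have hkey : v * (4 * v + 1) = p ^ r := by
    have h1 : 16 * (v * (4 * v + 1)) = 16 * p ^ r := by nlinarith [hsq]
    exact Nat.eq_of_mul_eq_mul_left (by norm_num) h1
  have hdvd : (4 * v + 1) ∣ p ^ r := ⟨v, by rw [← hkey]; ring⟩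
  obtain ⟨j, hj, hmj⟩ := (Nat.dvd_prime_pow hp).mp hdvd
  have hppos : 0 < p ^ r := pow_pos hp.pos r
  have hj1 : 1 ≤ j := by
    by_contra hc
    have hj0 : j = 0 := by omega
    rw [hj0, pow_zero] at hmj
    have hv0 : v = 0 := by omega
    have hz : (0 : ℕ) = p ^ r := by rw [← hkey, hv0]
    exact absurd hz.symm hppos.ne'
  have hjr : j = r := by
    by_contra hc
    have hjlt : j < r := lt_of_le_of_ne hj hc
    have h2 : v * p ^ j = p ^ r := by rw [← hkey, hmj]
    have h3 : p ^ (r - j) * p ^ j = p ^ r := by rw [← pow_add]; congr 1; omega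
    have hveq : v = p ^ (r - j) :=
      Nat.eq_of_mul_eq_mul_right (pow_pos hp.pos j) (h2.trans h3.symm)
    have hpv : p ∣ v := by
      rw [hveq]; exact dvd_pow_self p (by omega)
    have hpm : p ∣ 4 * v + 1 := by
      rw [hmj]; exact dvd_pow_self p (by omega)
    have hp1 : p ∣ 1 := by
      have h5 := Nat.dvd_sub hpm (hpv.mul_left 4)
      simpa using h5
    have := Nat.eq_one_of_dvd_one hp1
    exact absurd this hp.one_lt.ne'
  have hv1 : v = 1 := by
    rw [hjr] at hmj
    have h2 : v * (4 * v + 1) = 1 * (4 * v + 1) := by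
      rw [one_mul, hkey]; exact hmj.symm
    exact Nat.eq_of_mul_eq_mul_right (by omega) h2
  have hp5 : p ^ r = 5 := by rw [← hkey, hv1]
  have hpeq : p = 5 := by
    have : p ∣ 5 := by
      rw [← hp5]; exact dvd_pow_self p hr.ne'
    exact (Nat.prime_dvd_prime_iff_eq hp (by norm_num)).mp this
  have hY9 : Y ^ 2 = 3 ^ 2 := by rw [hY2, hv1]; norm_num
  have hY3 : Y = 3 := Nat.pow_left_injective (by norm_num) hY9
  rw [hY] at hY3
  have hq3 : q = 3 := by
    have : q ∣ 3 := by rw [← hY3]; exact dvd_pow_self q hk.ne'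
    exact (Nat.prime_dvd_prime_iff_eq hq (by norm_num)).mp this
  have hk1 : k = 1 := by
    rw [hq3] at hY3
    have : (3 : ℕ) ^ k = 3 ^ 1 := by rw [hY3, pow_one]
    exact Nat.pow_right_injective (by norm_num) this
  subst hk1; subst hq3; subst hpeq
  exact ⟨⟨2, rfl⟩, by norm_num, rfl, rfl, rfl⟩
end

section
/- Let a and b be odd integers with b ≠ 0, a ≠ 0, gcd(a, b) = 1, and 4a + b > 1. Suppose each of a², b², (4a−b), and (4a+b) is, up to sign, a product of powers of at most two fixed odd primes p and q, and that a², b², 4a−b, 4a+b are pairwise coprime. If 4a − b ∉ {1, −1}, then a² = b² = 1. -/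
lemma aux_pm (p q : ℕ) (x : ℤ)
    (h : ∃ i j : ℕ, x = (p : ℤ) ^ i * (q : ℤ) ^ j ∨ x = -((p : ℤ) ^ i * (q : ℤ) ^ j))
    (hpx : ¬ (p : ℤ) ∣ x) (hqx : ¬ (q : ℤ) ∣ x) : x = 1 ∨ x = -1 := by
  obtain ⟨i, j, h⟩ := h
  have hi : i = 0 := by
    by_contra hi
    apply hpx
    rcases h with h | h <;> subst h
    · exact Dvd.dvd.mul_right (dvd_pow_self _ hi) _
    · exact (Dvd.dvd.mul_right (dvd_pow_self _ hi) _).neg_right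
  have hj : j = 0 := by
    by_contra hj
    apply hqx
    rcases h with h | h <;> subst h
    · exact Dvd.dvd.mul_left (dvd_pow_self _ hj) _
    · exact (Dvd.dvd.mul_left (dvd_pow_self _ hj) _).neg_right
  subst hi; subst hj; simpa using h

theorem stmt_15 (a b : ℤ) (ha : Odd a) (hb : Odd b) (ha0 : a ≠ 0) (hb0 : b ≠ 0)
    (hcop : IsCoprime a b) (hpos : 4 * a + b > 1)
    (p q : ℕ) (hp : p.Prime) (hq : q.Prime) (hpodd : Odd p) (hqodd : Odd q)
    (hsupp : ∀ x ∈ ({a ^ 2, b ^ 2, 4 * a - b, 4 * a + b} : Set ℤ),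
      ∃ i j : ℕ, x = (p : ℤ) ^ i * (q : ℤ) ^ j ∨ x = -((p : ℤ) ^ i * (q : ℤ) ^ j))
    (hc1 : IsCoprime (a ^ 2) (b ^ 2)) (hc2 : IsCoprime (a ^ 2) (4 * a - b))
    (hc3 : IsCoprime (a ^ 2) (4 * a + b)) (hc4 : IsCoprime (b ^ 2) (4 * a - b))
    (hc5 : IsCoprime (b ^ 2) (4 * a + b)) (hc6 : IsCoprime (4 * a - b) (4 * a + b))
    (hne : 4 * a - b ≠ 1 ∧ 4 * a - b ≠ -1) :
    a ^ 2 = 1 ∧ b ^ 2 = 1 := by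
  have hpu : ¬ IsUnit ((p : ℤ)) := (Int.prime_iff_natAbs_prime.mpr (by simpa using hp)).not_unit
  have hqu : ¬ IsUnit ((q : ℤ)) := (Int.prime_iff_natAbs_prime.mpr (by simpa using hq)).not_unit
  have key : ∀ x y d : ℤ, IsCoprime x y → ¬ IsUnit d → d ∣ x → d ∣ y → False :=
    fun x y d hc hdu hx hy => hdu (hc.isUnit_of_dvd' hx hy)
  have hm1 : (4 * a - b) ∈ ({a ^ 2, b ^ 2, 4 * a - b, 4 * a + b} : Set ℤ) := by simp
  have hm2 : (4 * a + b) ∈ ({a ^ 2, b ^ 2, 4 * a - b, 4 * a + b} : Set ℤ) := by simp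
  have hma : (a ^ 2) ∈ ({a ^ 2, b ^ 2, 4 * a - b, 4 * a + b} : Set ℤ) := by simp
  have hmb : (b ^ 2) ∈ ({a ^ 2, b ^ 2, 4 * a - b, 4 * a + b} : Set ℤ) := by simp
  have h1 : (p : ℤ) ∣ (4 * a - b) ∨ (q : ℤ) ∣ (4 * a - b) := by
    by_contra hcon
    push_neg at hcon
    rcases aux_pm p q _ (hsupp _ hm1) hcon.1 hcon.2 with h | h
    · exact hne.1 h
    · exact hne.2 h
  have h2 : (p : ℤ) ∣ (4 * a + b) ∨ (q : ℤ) ∣ (4 * a + b) := by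
    by_contra hcon
    push_neg at hcon
    rcases aux_pm p q _ (hsupp _ hm2) hcon.1 hcon.2 with h | h <;> omega
  have sq_one : ∀ x : ℤ, x ≠ 0 → x ^ 2 = 1 ∨ x ^ 2 = -1 → x ^ 2 = 1 := by
    intro x hx h
    rcases h with h | h
    · exact h
    · nlinarith [sq_nonneg x]
  rcases h1 with hd1 | hd1 <;> rcases h2 with hd2 | hd2
  · exact absurd (key _ _ _ hc6 hpu hd1 hd2) (fun h => h)
  · constructor
    · refine sq_one a ha0 (aux_pm p q _ (hsupp _ hma) ?_ ?_)
      · exact fun h => key _ _ _ hc2 hpu h hd1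
      · exact fun h => key _ _ _ hc3 hqu h hd2
    · refine sq_one b hb0 (aux_pm p q _ (hsupp _ hmb) ?_ ?_)
      · exact fun h => key _ _ _ hc4 hpu h hd1
      · exact fun h => key _ _ _ hc5 hqu h hd2
  · constructor
    · refine sq_one a ha0 (aux_pm p q _ (hsupp _ hma) ?_ ?_)
      · exact fun h => key _ _ _ hc3 hpu h hd2
      · exact fun h => key _ _ _ hc2 hqu h hd1
    · refine sq_one b hb0 (aux_pm p q _ (hsupp _ hmb) ?_ ?_)
      · exact fun h => key _ _ _ hc5 hpu h hd2
      · exact fun h => key _ _ _ hc4 hqu h hd1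
  · exact absurd (key _ _ _ hc6 hqu hd1 hd2) (fun h => h)
end
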